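/- Consider the bowtie game G_⋈ under first-price Richman bidding. For every pair of finitely supported budget distributions β (for Max) and γ (for Min) over positive reals, both players' values exist and coincide: MP↓(G_⋈, β, γ) = MP↑(G_⋈, β, γ) = 1/2. -/

import Mathlib

open Filter Finset

noncomputable section

/-- A history of the bowtie game: the list of rounds played so far; each round
records the vertex at which the bidding took place (`true` is the vertex `u`
of weight 1, `false` is the vertex `v` of weight 0), Max's bid and Min's bid. -/
abbrev Hist : Type := List (Bool × ℝ × ℝ)

/-- A pure strategy: given the history and the current vertex, produce a bid and
the vertex to move to upon winning the bidding. -/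
abbrev Strat : Type := Hist → Bool → ℝ × Bool

/-- One bidding round: both players bid; the higher bidder moves the token
(ties are resolved in favor of Min). -/
def step (f g : Strat) (hv : Hist × Bool) : Hist × Bool :=
  (hv.1 ++ [(hv.2, (f hv.1 hv.2).1, (g hv.1 hv.2).1)],
    if (g hv.1 hv.2).1 < (f hv.1 hv.2).1 then (f hv.1 hv.2).2 else (g hv.1 hv.2).2)

/-- The history and current vertex after `n` rounds of the play induced by the
Max strategy `f` and the Min strategy `g` from the initial vertex `v0`. -/
def hist (f g : Strat) (v0 : Bool) : ℕ → Hist × Bool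
  | 0 => ([], v0)
  | n + 1 => step f g (hist f g v0 n)

/-- The vertex visited at time `n` in the play induced by `f` and `g` from `v0`. -/
def vtx (f g : Strat) (v0 : Bool) (n : ℕ) : Bool := (hist f g v0 n).2

/-- The weights of the bowtie game: `w(u) = 1`, `w(v) = 0`. -/
def wt (b : Bool) : ℝ := if b then 1 else 0

/-- The mean-payoff of the play induced by `f` and `g` from `v0`:
`liminf` of the average weight seen in the first `n` rounds. -/
def payoff (f g : Strat) (v0 : Bool) : ℝ :=
  Filter.liminf (fun n : ℕ => (∑ i ∈ Finset.range n, wt (vtx f g v0 i)) / n) Filter.atTop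

/-- In first-price bidding only the winner pays; here we record each player's
total investment (sum of winning bids; ties are won by Min). -/
def maxInv (h : Hist) : ℝ := (h.map fun r => if r.2.2 < r.2.1 then r.2.1 else 0).sum

def minInv (h : Hist) : ℝ := (h.map fun r => if r.2.2 < r.2.1 then 0 else r.2.2).sum

/-- `f ∈ S_Max(B)` under first-price Richman bidding: winning bids are paid to
the opponent, so Max's available budget after `h` is `B - maxInv h + minInv h`;
along any play consistent with `f`, all prescribed bids are nonnegative and do
not exceed this available budget. -/
def richMaxLegal (f : Strat) (B : ℝ) : Prop :=
  ∀ g : Strat, ∀ v0 : Bool, ∀ n : ℕ,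
    0 ≤ (f (hist f g v0 n).1 (hist f g v0 n).2).1 ∧
    (f (hist f g v0 n).1 (hist f g v0 n).2).1
      ≤ B - maxInv (hist f g v0 n).1 + minInv (hist f g v0 n).1

/-- `g ∈ S_Min(C)` under first-price Richman bidding. -/
def richMinLegal (g : Strat) (C : ℝ) : Prop :=
  ∀ f : Strat, ∀ v0 : Bool, ∀ n : ℕ,
    0 ≤ (g (hist f g v0 n).1 (hist f g v0 n).2).1 ∧
    (g (hist f g v0 n).1 (hist f g v0 n).2).1
      ≤ C - minInv (hist f g v0 n).1 + maxInv (hist f g v0 n).1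

/-- A finitely supported budget distribution over positive reals. -/
structure BudgetDist where
  supp : Finset ℝ
  prob : ℝ → ℝ
  supp_pos : ∀ b ∈ supp, 0 < b
  prob_pos : ∀ b ∈ supp, 0 < prob b
  prob_sum : ∑ b ∈ supp, prob b = 1

/-- `MP↓(G_⋈, β, γ) = c` under first-price Richman bidding: for all `δ, ε > 0`,
(i) there is a collection `(f_B ∈ S_Max(B + δ))_{B ∈ supp β}` guaranteeing
expected payoff `≥ c - ε` against every collection `(g_C ∈ S_Min(C))_{C ∈ supp γ}`,
and (ii) for every collection `(f_B ∈ S_Max(B))_B` there is a collection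
`(g_C ∈ S_Min(C + δ))_C` keeping the expected payoff `≤ c + ε`. -/
def RichMPdownIs (v0 : Bool) (β γ : BudgetDist) (c : ℝ) : Prop :=
  ∀ δ > (0 : ℝ), ∀ ε > (0 : ℝ),
    (∃ F : ℝ → Strat, (∀ B ∈ β.supp, richMaxLegal (F B) (B + δ)) ∧
      ∀ G : ℝ → Strat, (∀ C ∈ γ.supp, richMinLegal (G C) C) →
        c - ε ≤ ∑ B ∈ β.supp, ∑ C ∈ γ.supp,
          β.prob B * γ.prob C * payoff (F B) (G C) v0) ∧
    (∀ F : ℝ → Strat, (∀ B ∈ β.supp, richMaxLegal (F B) B) →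
      ∃ G : ℝ → Strat, (∀ C ∈ γ.supp, richMinLegal (G C) (C + δ)) ∧
        ∑ B ∈ β.supp, ∑ C ∈ γ.supp,
          β.prob B * γ.prob C * payoff (F B) (G C) v0 ≤ c + ε)

/-- `MP↑(G_⋈, β, γ) = c` under first-price Richman bidding (dual). -/
def RichMPupIs (v0 : Bool) (β γ : BudgetDist) (c : ℝ) : Prop :=
  ∀ δ > (0 : ℝ), ∀ ε > (0 : ℝ),
    (∃ G : ℝ → Strat, (∀ C ∈ γ.supp, richMinLegal (G C) (C + δ)) ∧
      ∀ F : ℝ → Strat, (∀ B ∈ β.supp, richMaxLegal (F B) B) →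
        ∑ B ∈ β.supp, ∑ C ∈ γ.supp,
          β.prob B * γ.prob C * payoff (F B) (G C) v0 ≤ c + ε) ∧
    (∀ G : ℝ → Strat, (∀ C ∈ γ.supp, richMinLegal (G C) C) →
      ∃ F : ℝ → Strat, (∀ B ∈ β.supp, richMaxLegal (F B) (B + δ)) ∧
        c - ε ≤ ∑ B ∈ β.supp, ∑ C ∈ γ.supp,
          β.prob B * γ.prob C * payoff (F B) (G C) v0)

/-!
Each player bids a fixed small fraction `l` of its current budget and, on winning, moves the
token to its preferred vertex. A round won shrinks the bidder's budget by the factor `1 - l`;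
a round lost makes it grow by at least the factor `1 + l`, since the opponent paid at least as
much. The budget never exceeds the total money `B + C`, so after `n` rounds with `W` wins
`W log (1 - l) + (n - W) log (1 + l) ≤ log ((B + C) / B)`, which forces `W ≥ (1 - l) n / 2 - O(1)`.
Hence each player controls the token at least a fraction `(1 - l) / 2` of the time, whatever
the opponent does, and letting `l → 0` gives the value `1 / 2`.
-/

namespace BudgetDist

variable (β γ : BudgetDist)

theorem sum_sum_mul_const (a : ℝ) :
    ∑ B ∈ β.supp, ∑ C ∈ γ.supp, β.prob B * γ.prob C * a = a := by
  calc _ = (∑ B ∈ β.supp, β.prob B) * (∑ C ∈ γ.supp, γ.prob C) * a := by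
        simp_rw [sum_mul_sum, sum_mul]
    _ = a := by rw [β.prob_sum, γ.prob_sum, one_mul, one_mul]

variable {β γ} {x : ℝ → ℝ → ℝ} {a : ℝ}

theorem le_sum_sum_mul (h : ∀ B ∈ β.supp, ∀ C ∈ γ.supp, a ≤ x B C) :
    a ≤ ∑ B ∈ β.supp, ∑ C ∈ γ.supp, β.prob B * γ.prob C * x B C := by
  calc a = ∑ B ∈ β.supp, ∑ C ∈ γ.supp, β.prob B * γ.prob C * a := (sum_sum_mul_const β γ a).symm
    _ ≤ _ := by
      gcongr with B hB C hC
      · exact mul_nonneg (β.prob_pos B hB).le (γ.prob_pos C hC).le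
      · exact h B hB C hC

theorem sum_sum_mul_le (h : ∀ B ∈ β.supp, ∀ C ∈ γ.supp, x B C ≤ a) :
    ∑ B ∈ β.supp, ∑ C ∈ γ.supp, β.prob B * γ.prob C * x B C ≤ a := by
  calc _ ≤ ∑ B ∈ β.supp, ∑ C ∈ γ.supp, β.prob B * γ.prob C * a := by
        gcongr with B hB C hC
        · exact mul_nonneg (β.prob_pos B hB).le (γ.prob_pos C hC).le
        · exact h B hB C hC
    _ = a := sum_sum_mul_const β γ a

end BudgetDist

namespace Bowtie

open Real

section CesaroAverage

variable {w : ℕ → ℝ} {c D : ℝ}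

theorem le_liminf_avg (hw : ∀ i, w i ≤ 1) (h : ∀ n : ℕ, c * n - D ≤ ∑ i ∈ range n, w i) :
    c ≤ liminf (fun n : ℕ => (∑ i ∈ range n, w i) / n) atTop := by
  refine le_of_forall_sub_le fun δ hδ => le_liminf_of_le ?_ ?_
  · refine isCoboundedUnder_ge_of_le atTop (x := 1) fun n => div_le_one_of_le₀ ?_ n.cast_nonneg
    simpa using Finset.sum_le_sum fun i (_ : i ∈ range n) => hw i
  · filter_upwards [(tendsto_const_div_atTop_nhds_zero_nat D).eventually (gt_mem_nhds hδ),
      eventually_gt_atTop 0] with n hDn hn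
    have hn' : (0 : ℝ) < n := Nat.cast_pos.mpr hn
    rw [le_div_iff₀ hn']
    have : D = D / n * n := by field_simp
    nlinarith [h n]

theorem liminf_avg_le (hw : ∀ i, 0 ≤ w i) (h : ∀ n : ℕ, ∑ i ∈ range n, w i ≤ c * n + D) :
    liminf (fun n : ℕ => (∑ i ∈ range n, w i) / n) atTop ≤ c := by
  refine le_of_forall_pos_le_add fun δ hδ => liminf_le_of_le ?_ fun b hb => ?_
  · exact isBoundedUnder_of_eventually_ge (a := 0) <| .of_forall fun n =>
      div_nonneg (Finset.sum_nonneg fun i _ => hw i) n.cast_nonneg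
  · obtain ⟨n, hbn, hDn, hn⟩ := (hb.and <| ((tendsto_const_div_atTop_nhds_zero_nat D).eventually
      (gt_mem_nhds hδ)).and (eventually_gt_atTop 0)).exists
    have hn' : (0 : ℝ) < n := Nat.cast_pos.mpr hn
    rw [le_div_iff₀ hn'] at hbn
    have : D = D / n * n := by field_simp
    nlinarith [h n]

end CesaroAverage

section BudgetSequence

variable {a : ℕ → ℝ} {won : ℕ → Prop} [DecidablePred won] {l K : ℝ}

theorem mul_exp_sum_le_of_step {z : ℕ → ℝ} (h : ∀ n, exp (z n) * a n ≤ a (n + 1)) (n : ℕ) :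
    a 0 * exp (∑ i ∈ range n, z i) ≤ a n := by
  induction n with
  | zero => simp
  | succ n ih =>
    rw [sum_range_succ, exp_add, ← mul_assoc, mul_comm _ (exp (z n))]
    calc _ ≤ exp (z n) * a n := by gcongr
      _ ≤ a (n + 1) := h n

theorem pos_of_step (hl0 : 0 ≤ l) (hl1 : l < 1) (ha0 : 0 < a 0)
    (hstep : ∀ n, (if won n then 1 - l else 1 + l) * a n ≤ a (n + 1)) (n : ℕ) : 0 < a n := by
  induction n with
  | zero => exact ha0
  | succ n ih =>
    have hr : 0 < (if won n then 1 - l else 1 + l) := by split_ifs <;> linarith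
    exact (mul_pos hr ih).trans_le (hstep n)

theorem exists_card_filter_ge_of_step (hl0 : 0 < l) (hl1 : l < 1) (ha0 : 0 < a 0)
    (hK : ∀ n, a n ≤ K) (hstep : ∀ n, (if won n then 1 - l else 1 + l) * a n ≤ a (n + 1)) :
    ∃ D, ∀ n : ℕ, (1 - l) / 2 * n - D ≤ #{i ∈ range n | won i} := by
  set x := log (1 + l)
  set y := -log (1 - l)
  have hpos : 0 < 1 - l := by linarith
  have hx : l ≤ (1 + l) * x := calc
    l = (1 + l) * (1 - (1 + l)⁻¹) := by field_simp; ring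
    _ ≤ (1 + l) * x :=
      mul_le_mul_of_nonneg_left (one_sub_inv_le_log_of_pos (by linarith)) (by linarith)
  have hy : (1 - l) * y ≤ l := by
    have : (1 - l) * (1 - (1 - l)⁻¹) = -l := by field_simp [hpos.ne']; ring
    nlinarith [mul_le_mul_of_nonneg_left (one_sub_inv_le_log_of_pos hpos) hpos.le]
  have hxy : 0 < x + y := by
    have : 0 < x := log_pos (by linarith)
    have : 0 < y := neg_pos.mpr (log_neg (by linarith) (by linarith))
    linarith
  set c := log (K / a 0)
  refine ⟨c / (x + y), fun n => ?_⟩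
  have hsum : n * x - (x + y) * #{i ∈ range n | won i} ≤ c := by
    set z : ℕ → ℝ := fun i => if won i then log (1 - l) else log (1 + l)
    have hz : ∀ i, exp (z i) = if won i then 1 - l else 1 + l := fun i => by
      simp only [z]; split_ifs <;> exact exp_log (by linarith)
    have hzsum : ∑ i ∈ range n, z i = n * x - (x + y) * #{i ∈ range n | won i} := by
      rw [natCast_card_filter, mul_sum, show (n : ℝ) * x = ∑ _i ∈ range n, x by simp,
        ← sum_sub_distrib]
      refine sum_congr rfl fun i _ => ?_
      simp only [z, x, y]; split_ifs <;> ring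
    have := (mul_exp_sum_le_of_step (fun n => (hz n).symm ▸ hstep n) n).trans (hK n)
    rw [← hzsum, le_log_iff_exp_le (div_pos (ha0.trans_le (hK 0)) ha0), le_div_iff₀ ha0]
    linarith
  have hxy2 : (1 - l) * (x + y) ≤ 2 * x := by linarith
  have key : ((1 - l) / 2 * n - #{i ∈ range n | won i}) * (x + y) ≤ c := by
    nlinarith [mul_le_mul_of_nonneg_right hxy2 n.cast_nonneg]
  linarith [(le_div_iff₀ hxy).mpr key]

end BudgetSequence

section Play

variable (f g : Strat) (v0 : Bool)

def maxBid (n : ℕ) : ℝ := (f (hist f g v0 n).1 (hist f g v0 n).2).1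

def minBid (n : ℕ) : ℝ := (g (hist f g v0 n).1 (hist f g v0 n).2).1

def maxWins (n : ℕ) : ℕ := #{i ∈ range n | minBid f g v0 i < maxBid f g v0 i}

/-- The net amount paid to Max so far: Max's budget is `B + transfer` and Min's is
`C - transfer`. -/
def transfer (n : ℕ) : ℝ := minInv (hist f g v0 n).1 - maxInv (hist f g v0 n).1

theorem transfer_zero : transfer f g v0 0 = 0 := by
  simp [transfer, hist, maxInv, minInv]

theorem transfer_succ (n : ℕ) : transfer f g v0 (n + 1) = transfer f g v0 n +
    if minBid f g v0 n < maxBid f g v0 n then -maxBid f g v0 n else minBid f g v0 n := by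
  simp only [transfer, hist, step, maxInv, minInv, maxBid, minBid, List.map_append,
    List.sum_append, List.map_cons, List.map_nil, List.sum_cons, List.sum_nil, add_zero]
  split_ifs with hwin <;> simp only [hwin, if_true, if_false] <;> ring

theorem vtx_succ (n : ℕ) : vtx f g v0 (n + 1) =
    if minBid f g v0 n < maxBid f g v0 n then (f (hist f g v0 n).1 (hist f g v0 n).2).2
    else (g (hist f g v0 n).1 (hist f g v0 n).2).2 := rfl

theorem transfer_le_of_richMinLegal {C : ℝ} (hg : richMinLegal g C) (n : ℕ) :
    transfer f g v0 n ≤ C := by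
  obtain ⟨h0, h1⟩ := hg f v0 n
  unfold transfer
  linarith

theorem neg_le_transfer_of_richMaxLegal {B : ℝ} (hf : richMaxLegal f B) (n : ℕ) :
    -B ≤ transfer f g v0 n := by
  obtain ⟨h0, h1⟩ := hf g v0 n
  unfold transfer
  linarith

theorem wt_nonneg (b : Bool) : 0 ≤ wt b := by cases b <;> simp [wt]

theorem wt_le_one (b : Bool) : wt b ≤ 1 := by cases b <;> simp [wt]

theorem maxWins_le_sum_wt (hf : ∀ h v, (f h v).2 = true) (n : ℕ) :
    (maxWins f g v0 n : ℝ) ≤ ∑ i ∈ range (n + 1), wt (vtx f g v0 i) := by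
  rw [maxWins, natCast_card_filter, sum_range_succ']
  have : ∀ i ∈ range n, (if minBid f g v0 i < maxBid f g v0 i then (1 : ℝ) else 0)
      ≤ wt (vtx f g v0 (i + 1)) := fun i _ => by
    split_ifs with hwin
    · simp [vtx_succ, hwin, hf, wt]
    · exact wt_nonneg _
  linarith [sum_le_sum this, wt_nonneg (vtx f g v0 0)]

theorem sum_wt_le_maxWins (hg : ∀ h v, (g h v).2 = false) (n : ℕ) :
    ∑ i ∈ range (n + 1), wt (vtx f g v0 i) ≤ maxWins f g v0 n + 1 := by
  rw [maxWins, natCast_card_filter, sum_range_succ']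
  have : ∀ i ∈ range n, wt (vtx f g v0 (i + 1))
      ≤ (if minBid f g v0 i < maxBid f g v0 i then (1 : ℝ) else 0) := fun i _ => by
    split_ifs with hwin
    · exact wt_le_one _
    · simp [vtx_succ, hwin, hg, wt]
  linarith [sum_le_sum this, wt_le_one (vtx f g v0 0)]

end Play

def maxFracStrat (l B : ℝ) : Strat := fun h _ => (l * (B + (minInv h - maxInv h)), true)

def minFracStrat (l C : ℝ) : Strat := fun h _ => (l * (C - (minInv h - maxInv h)), false)

section FracStrat

variable {l B C : ℝ} {f g : Strat} (v0 : Bool)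

theorem maxFracStrat_step (n : ℕ) :
    (if minBid (maxFracStrat l B) g v0 n < maxBid (maxFracStrat l B) g v0 n then 1 - l else 1 + l)
        * (B + transfer (maxFracStrat l B) g v0 n) ≤
      B + transfer (maxFracStrat l B) g v0 (n + 1) := by
  have hbid : maxBid (maxFracStrat l B) g v0 n = l * (B + transfer (maxFracStrat l B) g v0 n) := rfl
  rw [transfer_succ]
  split_ifs with hwin
  · linarith
  · linarith [not_lt.mp hwin]

theorem minFracStrat_step (n : ℕ) :
    (if ¬minBid f (minFracStrat l C) v0 n < maxBid f (minFracStrat l C) v0 n then 1 - l else 1 + l)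
        * (C - transfer f (minFracStrat l C) v0 n) ≤
      C - transfer f (minFracStrat l C) v0 (n + 1) := by
  have hbid : minBid f (minFracStrat l C) v0 n = l * (C - transfer f (minFracStrat l C) v0 n) := rfl
  rw [transfer_succ]
  split_ifs with hwin
  · linarith
  · linarith

theorem maxFracStrat_legal (hl0 : 0 ≤ l) (hl1 : l < 1) (hB : 0 < B) :
    richMaxLegal (maxFracStrat l B) B := by
  intro g v0 n
  have hpos := pos_of_step hl0 hl1 (by simpa [transfer_zero]) (maxFracStrat_step (g := g) v0) n
  simp only [transfer] at hpos
  simp only [maxFracStrat]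
  constructor <;> nlinarith

theorem minFracStrat_legal (hl0 : 0 ≤ l) (hl1 : l < 1) (hC : 0 < C) :
    richMinLegal (minFracStrat l C) C := by
  intro f v0 n
  have hpos := pos_of_step hl0 hl1 (by simpa [transfer_zero]) (minFracStrat_step (f := f) v0) n
  simp only [transfer] at hpos
  simp only [minFracStrat]
  constructor <;> nlinarith

theorem le_payoff_maxFracStrat (hl0 : 0 < l) (hl1 : l < 1) (hB : 0 < B) (hg : richMinLegal g C) :
    (1 - l) / 2 ≤ payoff (maxFracStrat l B) g v0 := by
  obtain ⟨D, hD⟩ := exists_card_filter_ge_of_step (a := fun n => B + transfer _ g v0 n)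
    (K := B + C) hl0 hl1 (by simpa [transfer_zero])
    (fun n => by linarith [transfer_le_of_richMinLegal (maxFracStrat l B) g v0 hg n])
    (maxFracStrat_step v0)
  refine le_liminf_avg (D := D + 1) (fun i => wt_le_one _) fun n => ?_
  have hwins := maxWins_le_sum_wt (maxFracStrat l B) g v0 (fun _ _ => rfl) n
  rw [sum_range_succ, maxWins] at hwins
  linarith [hD n, wt_le_one (vtx (maxFracStrat l B) g v0 n)]

theorem payoff_minFracStrat_le (hl0 : 0 < l) (hl1 : l < 1) (hC : 0 < C) (hf : richMaxLegal f B) :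
    payoff f (minFracStrat l C) v0 ≤ (1 + l) / 2 := by
  obtain ⟨D, hD⟩ := exists_card_filter_ge_of_step (a := fun n => C - transfer f _ v0 n)
    (K := C + B) hl0 hl1 (by simpa [transfer_zero])
    (fun n => by linarith [neg_le_transfer_of_richMaxLegal f (minFracStrat l C) v0 hf n])
    (minFracStrat_step v0)
  refine liminf_avg_le (D := D + 1) (fun i => wt_nonneg _) fun n => ?_
  have hwins := sum_wt_le_maxWins f (minFracStrat l C) v0 (fun _ _ => rfl) n
  have hcard : (maxWins f (minFracStrat l C) v0 n : ℝ) +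
      #{i ∈ range n | ¬minBid f (minFracStrat l C) v0 i < maxBid f (minFracStrat l C) v0 i} = n :=
    mod_cast (card_filter_add_card_filter_not _).trans (card_range n)
  rw [sum_range_succ] at hwins
  linarith [hD n, wt_nonneg (vtx f (minFracStrat l C) v0 n)]

end FracStrat

section Guarantees

variable (v0 : Bool) (β γ : BudgetDist) {δ ε : ℝ}

theorem exists_max_strategies_ge (hδ : 0 ≤ δ) (hε : 0 < ε) :
    ∃ F : ℝ → Strat, (∀ B ∈ β.supp, richMaxLegal (F B) (B + δ)) ∧
      ∀ G : ℝ → Strat, (∀ C ∈ γ.supp, richMinLegal (G C) C) →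
        1 / 2 - ε ≤ ∑ B ∈ β.supp, ∑ C ∈ γ.supp,
          β.prob B * γ.prob C * payoff (F B) (G C) v0 := by
  set l := min ε (1 / 2)
  have hl0 : 0 < l := lt_min hε one_half_pos
  have hl1 : l < 1 := (min_le_right _ _).trans_lt one_half_lt_one
  have hlε : l ≤ ε := min_le_left _ _
  refine ⟨fun B => maxFracStrat l (B + δ), fun B hB => ?_, fun G hG => ?_⟩
  · exact maxFracStrat_legal hl0.le hl1 (by linarith [β.supp_pos B hB])
  · refine BudgetDist.le_sum_sum_mul fun B hB C hC => ?_
    have := le_payoff_maxFracStrat (B := B + δ) v0 hl0 hl1 (by linarith [β.supp_pos B hB])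
      (hG C hC)
    linarith

theorem exists_min_strategies_le (hδ : 0 ≤ δ) (hε : 0 < ε) :
    ∃ G : ℝ → Strat, (∀ C ∈ γ.supp, richMinLegal (G C) (C + δ)) ∧
      ∀ F : ℝ → Strat, (∀ B ∈ β.supp, richMaxLegal (F B) B) →
        ∑ B ∈ β.supp, ∑ C ∈ γ.supp,
          β.prob B * γ.prob C * payoff (F B) (G C) v0 ≤ 1 / 2 + ε := by
  set l := min ε (1 / 2)
  have hl0 : 0 < l := lt_min hε one_half_pos
  have hl1 : l < 1 := (min_le_right _ _).trans_lt one_half_lt_one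
  have hlε : l ≤ ε := min_le_left _ _
  refine ⟨fun C => minFracStrat l (C + δ), fun C hC => ?_, fun F hF => ?_⟩
  · exact minFracStrat_legal hl0.le hl1 (by linarith [γ.supp_pos C hC])
  · refine BudgetDist.sum_sum_mul_le fun B hB C hC => ?_
    have := payoff_minFracStrat_le (C := C + δ) v0 hl0 hl1 (by linarith [γ.supp_pos C hC])
      (hF B hB)
    linarith

end Guarantees

end Bowtie

/-- in the bowtie game under first-price Richman bidding,
for all finitely supported budget distributions `β` (for Max) and `γ` (for
Min), both players' values exist and coincide:
`MP↓(G_⋈, β, γ) = MP↑(G_⋈, β, γ) = 1/2`. -/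
theorem stmt_1 (v0 : Bool) (β γ : BudgetDist) :
    RichMPdownIs v0 β γ (1 / 2) ∧ RichMPupIs v0 β γ (1 / 2) := by
  refine ⟨fun δ hδ ε hε => ⟨Bowtie.exists_max_strategies_ge v0 β γ hδ.le hε, fun F hF => ?_⟩,
    fun δ hδ ε hε => ⟨Bowtie.exists_min_strategies_le v0 β γ hδ.le hε, fun G hG => ?_⟩⟩
  · obtain ⟨G, hGlegal, hG⟩ := Bowtie.exists_min_strategies_le v0 β γ hδ.le hε
    exact ⟨G, hGlegal, hG F hF⟩
  · obtain ⟨F, hFlegal, hF⟩ := Bowtie.exists_max_strategies_ge v0 β γ hδ.le hε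
    exact ⟨F, hFlegal, hF G hG⟩

end
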